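/- arXiv:1304.2295 — 3 statements merged into one kernel-verified Lean document; each statement's English description precedes it below -/
import Mathlib

section
/- Let T be a finite NW-deterministic Wang tile set admitting a valid Wang tiling t : ℤ² → T, and let 𝒜_T be its Mealy automaton. For n ∈ ℕ let w_n = (t(k+n, k))_{k∈ℕ} ∈ Σ^ω be the word read along the n-th diagonal. Then σ_⊥^m(w_n) = ⊥^m w_{m+n} for all n, m ∈ ℕ. -/
/-- A Mealy automaton with state set `A` and alphabet `X`:
a transition map `δ : A × X → A` and an output map `σ : A × X → X`. -/
structure Mealy (A X : Type*) where
  δ : A → X → A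
  σ : A → X → X

namespace Mealy

variable {A X : Type*} (M : Mealy A X)

/-- The state reached from state `a` after reading the finite word `u`. -/
def stA : A → List X → A
  | a, [] => a
  | a, x :: u => stA (M.δ a x) u

/-- The output word produced by the single state `a` on the finite input word `u`. -/
def outA : A → List X → List X
  | _, [] => []
  | a, x :: u => M.σ a x :: outA (M.δ a x) u

/-- The extended output map: the action `σ_as` of a state word `as` on a finite word. -/
def outW (as : List A) (u : List X) : List X :=
  as.foldl (fun w b => M.outA b w) u

/-- The extended transition map: `δ_u` applied to a state word. -/
def stW : List A → List X → List A
  | [], _ => []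
  | a :: as, u => M.stA a u :: stW as (M.outA a u)

/-- The action of a single state `a` on an infinite word. -/
def outInf (a : A) (w : ℕ → X) : ℕ → X :=
  fun n => M.σ (M.stA a (List.ofFn fun i : Fin n => w i)) (w n)

/-- The action `σ_as` of a state word on an infinite word. -/
def outWInf (as : List A) (w : ℕ → X) : ℕ → X :=
  as.foldl (fun v b => M.outInf b v) w

/-- The semigroup generated by the Mealy automaton, as the set of all
transformations of infinite words given by nonempty state words. -/
def genSet : Set ((ℕ → X) → (ℕ → X)) :=
  {f | ∃ as : List A, as ≠ [] ∧ f = M.outWInf as}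

end Mealy

/-- Concatenation of a finite word with an infinite word. -/
def listApp {X : Type*} (p : List X) (q : ℕ → X) : ℕ → X :=
  fun n => if h : n < p.length then p.get ⟨n, h⟩ else q (n - p.length)

/-- A tile set is NW-deterministic if each tile is determined by its
north and west colors. -/
def NWDet {T C : Type*} (N _S _E W : T → C) : Prop :=
  ∀ s t : T, N s = N t → W s = W t → s = t

open Classical in
/-- The Mealy automaton `𝒜_T` of a tile set: states and letters are tiles
together with a fresh symbol `⊥` (here `none`); the transition is the reset
`δ(x,y) = y`; the output `σ(s,t)` is the unique tile `r` with `r_N = t_S`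
and `r_W = s_E` if it exists, and `⊥` otherwise. -/
noncomputable def tileM {T C : Type*} (N S E W : T → C) :
    Mealy (Option T) (Option T) where
  δ := fun _ y => y
  σ := fun a x =>
    match a, x with
    | some s, some t =>
        if h : ∃ r : T, N r = S t ∧ W r = E s then some h.choose else none
    | _, _ => none

/-- A valid Wang tiling of the plane `ℤ²`. -/
def ValidZ2 {T C : Type*} (N S E W : T → C) (t : ℤ × ℤ → T) : Prop :=
  ∀ x y : ℤ, N (t (x, y)) = S (t (x, y + 1)) ∧ E (t (x, y)) = W (t (x + 1, y))

/-- A valid Wang tiling of the square `{0, 1, …, n}²`. -/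
def ValidSquare {T C : Type*} (N S E W : T → C) (n : ℕ) (t : ℕ → ℕ → T) : Prop :=
  (∀ x y : ℕ, x ≤ n → y < n → N (t x y) = S (t x (y + 1))) ∧
  (∀ x y : ℕ, x < n → y ≤ n → E (t x y) = W (t (x + 1) y))

/-
The state `⊥` of `𝒜_T` outputs `⊥` on the first letter and afterwards, since
`δ(x, y) = y`, maps consecutive letters `x y` to `σ(x, y)`. On the diagonal word `w_n` the pair
`t(k+n, k) t(k+1+n, k+1)` is sent to the unique tile with west colour `t(k+n, k)_E` and north
colour `t(k+1+n, k+1)_S`, which by validity and NW-determinism is `t(k+1+n, k)`; hence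
`σ_⊥(w_n) = ⊥ w_{n+1}`. Since `σ_⊥` also commutes with prepending `⊥`'s, induction on `m` gives
the claim.
-/

namespace Mealy

theorem outInf_zero {A X : Type*} (M : Mealy A X) (a : A) (w : ℕ → X) :
    M.outInf a w 0 = M.σ a (w 0) := rfl

section Reset

variable {A : Type*} (M : Mealy A A)

theorem stA_eq_getLastD_of_reset (hδ : ∀ a x, M.δ a x = x) (a : A) (u : List A) :
    M.stA a u = u.getLastD a := by
  induction u generalizing a with
  | nil => rfl
  | cons x u ih => rw [stA, hδ, ih, List.getLastD_cons]

theorem outInf_succ_of_reset (hδ : ∀ a x, M.δ a x = x) (a : A) (w : ℕ → A) (k : ℕ) :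
    M.outInf a w (k + 1) = M.σ (w k) (w (k + 1)) := by
  rw [outInf, stA_eq_getLastD_of_reset M hδ, List.ofFn_succ', List.concat_eq_append,
    List.getLastD_concat, Fin.val_last]

end Reset

end Mealy

/-- The word `⊥^j v`. -/
def padNone {T : Type*} (j : ℕ) (v : ℕ → Option T) : ℕ → Option T :=
  fun k => if k < j then none else v (k - j)

theorem padNone_zero {T : Type*} (v : ℕ → Option T) : padNone 0 v = v := by
  funext k
  simp [padNone]

theorem padNone_padNone {T : Type*} (i j : ℕ) (v : ℕ → Option T) :
    padNone i (padNone j v) = padNone (i + j) v := by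
  funext k
  simp only [padNone]
  split_ifs <;> first | rfl | omega | (congr 1; omega)

/-- The diagonal word `w_n`. -/
def diag {T : Type*} (t : ℤ × ℤ → T) (n : ℕ) : ℕ → Option T :=
  fun k => some (t ((k : ℤ) + n, (k : ℤ)))

section tileM

variable {T C : Type*} (N S E W : T → C)

theorem tileM_δ (a x : Option T) : (tileM N S E W).δ a x = x := rfl

theorem tileM_σ_none (x : Option T) : (tileM N S E W).σ none x = none := by
  cases x <;> rfl

theorem tileM_σ_some_of_colors (hNW : NWDet N S E W) {s u r : T} (hN : N r = S u)
    (hW : W r = E s) : (tileM N S E W).σ (some s) (some u) = some r := by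
  have hex : ∃ r : T, N r = S u ∧ W r = E s := ⟨r, hN, hW⟩
  simp only [tileM, dif_pos hex]
  exact congrArg some (hNW _ _ (hex.choose_spec.1.trans hN.symm) (hex.choose_spec.2.trans hW.symm))

theorem outInf_none_padNone (j : ℕ) (v : ℕ → Option T) :
    (tileM N S E W).outInf none (padNone j v) = padNone j ((tileM N S E W).outInf none v) := by
  funext k
  cases k with
  | zero => simp [padNone, Mealy.outInf_zero, tileM_σ_none]
  | succ k =>
    simp only [Mealy.outInf_succ_of_reset _ (tileM_δ N S E W), padNone]
    by_cases hk : k < j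
    · rw [if_pos hk, tileM_σ_none]
      split_ifs
      · rfl
      · rw [show k + 1 - j = 0 by omega, Mealy.outInf_zero, tileM_σ_none]
    · obtain ⟨d, rfl⟩ := Nat.exists_eq_add_of_le (not_lt.mp hk)
      rw [if_neg hk, if_neg (by omega), if_neg (by omega), show j + d + 1 - j = d + 1 by omega,
        Nat.add_sub_cancel_left, Mealy.outInf_succ_of_reset _ (tileM_δ N S E W)]

theorem outInf_none_diag (hNW : NWDet N S E W) {t : ℤ × ℤ → T} (ht : ValidZ2 N S E W t)
    (n : ℕ) : (tileM N S E W).outInf none (diag t n) = padNone 1 (diag t (n + 1)) := by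
  funext k
  cases k with
  | zero => simp [padNone, Mealy.outInf_zero, tileM_σ_none]
  | succ k =>
    rw [Mealy.outInf_succ_of_reset _ (tileM_δ N S E W)]
    simp only [padNone, diag, if_neg (show ¬ k + 1 < 1 by omega), Nat.add_sub_cancel]
    push_cast
    rw [add_right_comm, ← add_assoc]
    exact tileM_σ_some_of_colors N S E W hNW (ht _ _).1 (ht _ _).2.symm

end tileM

theorem stmt_8_general {T C : Type*} (N S E W : T → C)
    (hNW : NWDet N S E W) (t : ℤ × ℤ → T) (ht : ValidZ2 N S E W t)
    (w : ℕ → ℕ → Option T) (hw : ∀ n k : ℕ, w n k = some (t ((k : ℤ) + n, (k : ℤ))))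
    (n m : ℕ) :
    ((tileM N S E W).outInf none)^[m] (w n) =
      fun k => if k < m then none else w (m + n) (k - m) := by
  obtain rfl : w = diag t := funext fun n => funext (hw n)
  change _ = padNone m (diag t (m + n))
  induction m with
  | zero => rw [Function.iterate_zero_apply, padNone_zero, zero_add]
  | succ m ih =>
    rw [Function.iterate_succ_apply', ih, outInf_none_padNone, outInf_none_diag N S E W hNW ht,
      padNone_padNone, add_right_comm]

/-- let `t : ℤ² → T` be a valid Wang tiling by an NW-deterministic
tile set, and `w_n = (t(k+n, k))_k` the word along the `n`-th diagonal. Then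
`σ_⊥^m(w_n) = ⊥^m w_{m+n}` for all `n, m ∈ ℕ`. -/
theorem stmt_8 {T C : Type*} [Fintype T] (N S E W : T → C)
    (hNW : NWDet N S E W) (t : ℤ × ℤ → T) (ht : ValidZ2 N S E W t)
    (w : ℕ → ℕ → Option T) (hw : ∀ n k : ℕ, w n k = some (t ((k : ℤ) + n, (k : ℤ))))
    (n m : ℕ) :
    ((tileM N S E W).outInf none)^[m] (w n) =
      fun k => if k < m then none else w (m + n) (k - m) :=
  stmt_8_general N S E W hNW t ht w hw n m
end

section
/- Let T be a finite NW-deterministic Wang tile set. The plane ℤ² admits a valid Wang tiling by T if and only if the semigroup ⟨𝒜_T⟩ generated by the associated Mealy automaton 𝒜_T is infinite. -/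
/-!
Given a tiling `t`, let `d k` be the `k`-th diagonal `n ↦ t (n, n - k)` of `t`, preceded by
`k + 1` letters `⊥`. The reset state `⊥` maps `d k` to `d (k + 1)`, so the powers of `σ_⊥` are
pairwise distinct.

Conversely, if the plane cannot be tiled then, by compactness, neither can some square
`{0, …, n}²`. While a state word acts letter by letter, the successive rows form a space-time
diagram in which a tile at position `m` of the last row forces tiles in the whole triangle above
it, and that triangle is validly tiled. Hence words of length at least `2n` output `⊥` at every
position beyond `n`. Since the action is causal (position `m` of the output depends only on
positions `≤ m` of the input), these words give only finitely many transformations.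
-/

namespace Mealy

variable {A X : Type*} (M : Mealy A X)

lemma outWInf_append (as bs : List A) (w : ℕ → X) :
    M.outWInf (as ++ bs) w = M.outWInf bs (M.outWInf as w) :=
  List.foldl_append ..

lemma outWInf_take_succ (as : List A) (w : ℕ → X) {j : ℕ} (hj : j < as.length) :
    M.outWInf (as.take (j + 1)) w = M.outInf as[j] (M.outWInf (as.take j) w) := by
  rw [List.take_add_one, List.getElem?_eq_getElem hj, Option.toList_some, outWInf_append]
  rfl

lemma outInf_congr (a : A) {w w' : ℕ → X} {m : ℕ} (h : ∀ i ≤ m, w i = w' i) :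
    ∀ i ≤ m, M.outInf a w i = M.outInf a w' i := by
  intro i hi
  have hprefix : (List.ofFn fun j : Fin i => w j) = List.ofFn fun j : Fin i => w' j :=
    congrArg List.ofFn (funext fun j => h j (by omega))
  simp only [outInf, hprefix, h i hi]

lemma outWInf_congr (as : List A) {w w' : ℕ → X} {m : ℕ} (h : ∀ i ≤ m, w i = w' i) :
    ∀ i ≤ m, M.outWInf as w i = M.outWInf as w' i := by
  induction as generalizing w w' with
  | nil => exact h
  | cons a as ih => exact ih (M.outInf_congr a h)

end Mealy

lemma finite_setOf_causal_of_eq_of_lt {X : Type*} [Finite X] (n : ℕ) (x₀ : X) :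
    {f : (ℕ → X) → ℕ → X | (∀ w m, n < m → f w m = x₀) ∧
      ∀ w w', (∀ i ≤ n, w i = w' i) → ∀ m ≤ n, f w m = f w' m}.Finite := by
  let extend (v : Fin (n + 1) → X) (j : ℕ) : X := if h : j < n + 1 then v ⟨j, h⟩ else x₀
  let restrict (f : (ℕ → X) → ℕ → X) (v : Fin (n + 1) → X) (i : Fin (n + 1)) : X :=
    f (extend v) i
  refine Set.Finite.of_finite_image (f := restrict) (Set.toFinite _) ?_
  rintro f ⟨hf_far, hf_causal⟩ f' ⟨hf'_far, hf'_causal⟩ heq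
  funext w m
  rcases le_or_gt m n with hm | hm
  · have hw : ∀ i ≤ n, w i = extend (fun i => w i) i := fun i hi => by simp [extend, hi]
    have := congrFun (congrFun heq fun i => w i) ⟨m, by omega⟩
    rwa [hf_causal _ _ hw m hm, hf'_causal _ _ hw m hm]
  · rw [hf_far w m hm, hf'_far w m hm]

section TileAutomaton

variable {T C : Type*} {N S E W : T → C}

lemma tileM_σ_some_some (hNW : NWDet N S E W) {s t r : T} (hN : N r = S t) (hW : W r = E s) :
    (tileM N S E W).σ (some s) (some t) = some r := by
  have h : ∃ r' : T, N r' = S t ∧ W r' = E s := ⟨r, hN, hW⟩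
  simp only [tileM, dif_pos h]
  exact congrArg some (hNW _ _ (h.choose_spec.1.trans hN.symm) (h.choose_spec.2.trans hW.symm))

lemma exists_of_tileM_σ_eq_some {a x : Option T} {r : T} (h : (tileM N S E W).σ a x = some r) :
    ∃ s t, a = some s ∧ x = some t ∧ N r = S t ∧ W r = E s := by
  rcases a with _ | s <;> rcases x with _ | t <;> try cases h
  by_cases hex : ∃ r' : T, N r' = S t ∧ W r' = E s
  · simp only [tileM, dif_pos hex, Option.some_inj] at h
    exact ⟨s, t, rfl, rfl, h ▸ hex.choose_spec⟩
  · simp only [tileM, dif_neg hex] at h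
    cases h

lemma tileM_stA (a : Option T) (u : List (Option T)) :
    (tileM N S E W).stA a u = u.getLastD a := by
  induction u generalizing a with
  | nil => rfl
  | cons x u ih => rw [List.getLastD_cons]; exact ih x

lemma tileM_outInf_succ (a : Option T) (w : ℕ → Option T) (n : ℕ) :
    (tileM N S E W).outInf a w (n + 1) = (tileM N S E W).σ (w n) (w (n + 1)) := by
  rw [Mealy.outInf, tileM_stA, List.ofFn_succ', List.concat_eq_append, List.getLastD_concat]
  rfl

end TileAutomaton

section Forward

variable {T C : Type*} {N S E W : T → C}

def diagonalWord (t : ℤ × ℤ → T) (k : ℕ) : ℕ → Option T :=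
  fun n => if n ≤ k then none else some (t (n, n - k))

lemma diagonalWord_injective (t : ℤ × ℤ → T) : Function.Injective (diagonalWord t) := by
  have key : ∀ {k l}, k < l → diagonalWord t k ≠ diagonalWord t l := fun {k l} hkl h => by
    have := congrFun h l
    simp only [diagonalWord, le_refl, if_true, if_neg (not_le.mpr hkl)] at this
    cases this
  intro k l h
  by_contra hne
  rcases Nat.lt_or_gt_of_ne hne with hkl | hlk
  exacts [key hkl h, key hlk h.symm]

lemma tileM_outInf_none_diagonalWord (hNW : NWDet N S E W) {t : ℤ × ℤ → T}
    (ht : ValidZ2 N S E W t) (k : ℕ) :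
    (tileM N S E W).outInf none (diagonalWord t k) = diagonalWord t (k + 1) := by
  funext n
  rcases n with _ | n
  · rfl
  rw [tileM_outInf_succ]
  by_cases hn : n ≤ k
  · simp only [diagonalWord, if_pos hn, if_pos (by omega : n + 1 ≤ k + 1)]
    rfl
  · simp only [diagonalWord, if_neg hn, if_neg (by omega : ¬n + 1 ≤ k),
      if_neg (by omega : ¬n + 1 ≤ k + 1)]
    push_cast
    rw [show (n : ℤ) + 1 - (k + 1) = n - k by ring, show (n : ℤ) + 1 - k = n - k + 1 by ring]
    exact tileM_σ_some_some hNW (ht (n + 1) (n - k)).1 (ht n (n - k)).2.symm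

lemma tileM_outWInf_replicate_none_diagonalWord (hNW : NWDet N S E W) {t : ℤ × ℤ → T}
    (ht : ValidZ2 N S E W t) (k : ℕ) :
    (tileM N S E W).outWInf (List.replicate k none) (diagonalWord t 0) = diagonalWord t k := by
  induction k with
  | zero => rfl
  | succ k ih =>
    rw [List.replicate_succ', Mealy.outWInf_append, ih]
    exact tileM_outInf_none_diagonalWord hNW ht k

lemma tileM_genSet_infinite (hNW : NWDet N S E W) {t : ℤ × ℤ → T} (ht : ValidZ2 N S E W t) :
    (tileM N S E W).genSet.Infinite := by
  refine Set.infinite_of_injective_forall_mem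
    (f := fun k : ℕ => (tileM N S E W).outWInf (List.replicate (k + 1) none))
    (fun k l h => ?_) (fun k => ⟨_, by simp, rfl⟩)
  have hdiag := congrFun h (diagonalWord t 0)
  simp only [tileM_outWInf_replicate_none_diagonalWord hNW ht] at hdiag
  exact Nat.succ_injective (diagonalWord_injective t hdiag)

end Forward

section Backward

variable {T C : Type*} {N S E W : T → C}

lemma exists_of_tileM_outInf_succ_eq_some {a : Option T} {u : ℕ → Option T} {i : ℕ} {r : T}
    (h : (tileM N S E W).outInf a u (i + 1) = some r) :
    ∃ s t, u i = some s ∧ u (i + 1) = some t ∧ N r = S t ∧ W r = E s := by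
  rw [tileM_outInf_succ] at h
  exact exists_of_tileM_σ_eq_some h

lemma ne_none_of_tileM_outInf_ne_none {a : Option T} {u : ℕ → Option T} {i : ℕ}
    (h : (tileM N S E W).outInf a u i ≠ none) : u i ≠ none := by
  obtain ⟨r, hr⟩ := Option.ne_none_iff_exists'.mp h
  obtain ⟨-, t, -, ht, -⟩ := exists_of_tileM_σ_eq_some hr
  simp [ht]

lemma ne_none_of_tileM_outInf_succ_ne_none {a : Option T} {u : ℕ → Option T} {i : ℕ}
    (h : (tileM N S E W).outInf a u (i + 1) ≠ none) : u i ≠ none := by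
  obtain ⟨r, hr⟩ := Option.ne_none_iff_exists'.mp h
  obtain ⟨s, -, hs, -⟩ := exists_of_tileM_outInf_succ_eq_some hr
  simp [hs]

lemma ne_none_of_tileM_outWInf_ne_none (q : List (Option T)) {v : ℕ → Option T} {m : ℕ}
    (h : (tileM N S E W).outWInf q v m ≠ none) {i : ℕ} (him : i ≤ m)
    (hmi : m ≤ i + q.length) : v i ≠ none := by
  induction q generalizing v i with
  | nil => exact le_antisymm him hmi ▸ h
  | cons a q ih =>
    rcases (show m ≤ i + q.length ∨ m = i + 1 + q.length by grind) with hmi' | rfl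
    · exact ne_none_of_tileM_outInf_ne_none (ih h him hmi')
    · exact ne_none_of_tileM_outInf_succ_ne_none (ih h (by omega) le_rfl)

lemma exists_validSquare_of_tileM_outWInf_ne_none {n m : ℕ} {as : List (Option T)}
    {w : ℕ → Option T} (hlen : 2 * n ≤ as.length) (hm : n < m)
    (h : (tileM N S E W).outWInf as w m ≠ none) : ∃ u, ValidSquare N S E W n u := by
  set k := as.length
  let row (j : ℕ) : ℕ → Option T := (tileM N S E W).outWInf (as.take j) w
  have row_succ (j : ℕ) (hj : j < k) : row (j + 1) = (tileM N S E W).outInf as[j] (row j) :=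
    (tileM N S E W).outWInf_take_succ as w hj
  have row_ne_none (j i : ℕ) (him : i ≤ m) (hmi : m ≤ i + (k - j)) : row j i ≠ none := by
    rw [← List.take_append_drop j as, Mealy.outWInf_append] at h
    exact ne_none_of_tileM_outWInf_ne_none _ h him (by simpa using hmi)
  have row_succ_eq_some {j i : ℕ} (hj : j < k) {r : T} (h : row (j + 1) (i + 1) = some r) :
      ∃ s t, row j i = some s ∧ row j (i + 1) = some t ∧ N r = S t ∧ W r = E s :=
    exists_of_tileM_outInf_succ_eq_some (row_succ j hj ▸ h)
  obtain ⟨r₀, -⟩ := Option.ne_none_iff_exists'.mp h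
  let tile (x y : ℕ) : T := (row (k - (n - x) - y) (m - (n - x))).getD r₀
  have row_eq_tile {x y j i : ℕ} (hy : y ≤ n) (hj : j = k - (n - x) - y) (hi : i = m - (n - x)) :
      row j i = some (tile x y) := by
    subst hj hi
    exact (Option.getD_of_ne_none (row_ne_none _ _ (by omega) (by omega)) r₀).symm
  -- Going north means going back one row; going east, forward one row and one position.
  refine ⟨tile, fun x y hx hy => ?_, fun x y hx hy => ?_⟩
  · obtain ⟨-, t, -, ht, hN, -⟩ :=
      row_succ_eq_some (j := k - (n - x) - (y + 1)) (i := m - (n - x) - 1) (by omega)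
        (row_eq_tile (x := x) hy.le (by omega) (by omega))
    rw [row_eq_tile (x := x) hy (by omega) (by omega), Option.some_inj] at ht
    rw [hN, ht]
  · obtain ⟨s, -, hs, -, -, hW⟩ :=
      row_succ_eq_some (j := k - (n - x) - y) (i := m - (n - x)) (by omega)
        (row_eq_tile (x := x + 1) hy (by omega) (by omega))
    rw [row_eq_tile hy rfl rfl, Option.some_inj] at hs
    rw [hW, hs]

lemma tileM_genSet_finite [Finite T] {n : ℕ} (hn : ¬∃ u, ValidSquare N S E W n u) :
    (tileM N S E W).genSet.Finite := by
  refine ((List.finite_length_lt (Option T) (2 * n)).image (tileM N S E W).outWInf |>.union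
    (finite_setOf_causal_of_eq_of_lt n none)).subset ?_
  rintro f ⟨as, -, rfl⟩
  rcases lt_or_ge as.length (2 * n) with hlen | hlen
  · exact Or.inl ⟨as, hlen, rfl⟩
  · refine Or.inr ⟨fun w m hm => ?_, fun w w' hw => (tileM N S E W).outWInf_congr as hw⟩
    by_contra h
    exact hn (exists_validSquare_of_tileM_outWInf_ne_none hlen hm h)

end Backward

lemma exists_validZ2_of_forall_validSquare {T C : Type*} [Finite T] {N S E W : T → C}
    (h : ∀ n, ∃ u, ValidSquare N S E W n u) : ∃ t, ValidZ2 N S E W t := by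
  choose u hu using fun n => h (2 * n)
  let U := Filter.hyperfilter ℕ
  -- `u n` is re-centred so that the square `[-n, n]²` is tiled validly.
  let s (n : ℕ) (p : ℤ × ℤ) : T := u n (p.1 + n).toNat (p.2 + n).toNat
  have hlim (p : ℤ × ℤ) : ∃ a, ∀ᶠ n in (U : Filter ℕ), s n p = a := by
    obtain ⟨a, ha⟩ := (U.map fun n => s n p).eq_pure_of_finite
    exact ⟨a, Filter.tendsto_pure.mp (by rw [Filter.Tendsto, ← Ultrafilter.coe_map, ha]; rfl)⟩
  choose t ht using hlim
  refine ⟨t, fun x y => ?_⟩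
  have hlarge : ∀ᶠ n in (U : Filter ℕ), x.natAbs + y.natAbs + 2 ≤ n :=
    Filter.hyperfilter_le_cofinite (Nat.cofinite_eq_atTop ▸ Filter.eventually_ge_atTop _)
  obtain ⟨n, hn, h₀, hN, hE⟩ :=
    (hlarge.and ((ht (x, y)).and ((ht (x, y + 1)).and (ht (x + 1, y))))).exists
  rw [← h₀, ← hN, ← hE]
  simp only [s, show (y + 1 + n).toNat = (y + n).toNat + 1 by omega,
    show (x + 1 + n).toNat = (x + n).toNat + 1 by omega]
  exact ⟨(hu n).1 _ _ (by omega) (by omega), (hu n).2 _ _ (by omega) (by omega)⟩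

/-- for a finite NW-deterministic tile set `T`, the plane `ℤ²`
admits a valid Wang tiling by `T` if and only if the semigroup generated by
the Mealy automaton `𝒜_T` is infinite. -/
theorem stmt_12 {T C : Type*} [Fintype T] (N S E W : T → C)
    (hNW : NWDet N S E W) :
    (∃ t : ℤ × ℤ → T, ValidZ2 N S E W t) ↔ (tileM N S E W).genSet.Infinite := by
  refine ⟨fun ⟨t, ht⟩ => tileM_genSet_infinite hNW ht, fun hinf => ?_⟩
  by_contra hno
  obtain ⟨n, hn⟩ : ∃ n, ¬∃ u, ValidSquare N S E W n u := by
    by_contra! hall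
    exact hno (exists_validZ2_of_forall_validSquare hall)
  exact hinf (tileM_genSet_finite hn)
end

section
/- Let 𝒜 = (A, Σ, δ, σ) be a Mealy automaton and n ∈ ℕ. Suppose that for every u ∈ A* with |u| ≥ 2n, every p ∈ Σ^n, and every q ∈ Σ^ω, one has σ_u(pq) = σ_u(p) ⊥^ω for a fixed letter ⊥ ∈ Σ. Then the semigroup ⟨𝒜⟩ generated by 𝒜 has cardinality at most (Σ_{k=0}^{2n−1} |A|^k) + |Σ^n|^{|Σ^n|}; in particular it is finite. -/
/-!
A word `u` of length `< 2n` is one of `∑_{k<2n} |A|^k` words, so those give at most that many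
elements. For `|u| ≥ 2n` the hypothesis says that `σ_u w` is `σ_u` of the length-`n` prefix of `w`,
followed by `⊥^ω`; so `σ_u` is determined by a self-map of `Σ^n`, of which there are
`|Σ^n|^{|Σ^n|}`.
-/

theorem Set.finite_and_ncard_le_of_subset_range_union {α β γ : Type*} [Finite β] [Finite γ]
    {s : Set α} {f : β → α} {g : γ → α} (h : s ⊆ Set.range f ∪ Set.range g) :
    s.Finite ∧ s.ncard ≤ Nat.card β + Nat.card γ := by
  have hfin := (Set.finite_range f).union (Set.finite_range g)
  refine ⟨hfin.subset h, ?_⟩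
  calc s.ncard ≤ (Set.range f).ncard + (Set.range g).ncard :=
        (Set.ncard_le_ncard h hfin).trans (Set.ncard_union_le _ _)
    _ ≤ Nat.card β + Nat.card γ := add_le_add (Finite.card_range_le f) (Finite.card_range_le g)

theorem listApp_ofFn_shift {X : Type*} (n : ℕ) (w : ℕ → X) :
    listApp (List.ofFn fun i : Fin n => w i) (fun k => w (k + n)) = w := by
  funext m
  unfold listApp
  simp only [List.length_ofFn]
  split
  · simp
  · congr 1
    omega

def padBot {X : Type*} (bot : X) {n : ℕ} (φ : List.Vector X n → List.Vector X n) :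
    (ℕ → X) → ℕ → X :=
  fun w => listApp (φ (List.Vector.ofFn fun i : Fin n => w i)).1 fun _ => bot

namespace Mealy

variable {A X : Type*} (M : Mealy A X)

theorem outA_length (a : A) (u : List X) : (M.outA a u).length = u.length := by
  induction u generalizing a with
  | nil => rfl
  | cons x u ih => simp [outA, ih]

theorem outW_length (as : List A) (u : List X) : (M.outW as u).length = u.length := by
  induction as generalizing u with
  | nil => rfl
  | cons a as ih => exact (ih (M.outA a u)).trans (M.outA_length a u)

def outVec (as : List A) {n : ℕ} (p : List.Vector X n) : List.Vector X n :=
  ⟨M.outW as p.1, (M.outW_length as p.1).trans p.2⟩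

theorem outWInf_eq_padBot (bot : X) (n : ℕ) (u : List A)
    (hu : ∀ p : List X, p.length = n →
      ∀ q : ℕ → X, M.outWInf u (listApp p q) = listApp (M.outW u p) fun _ => bot) :
    M.outWInf u = padBot bot (M.outVec u (n := n)) := by
  funext w
  have hw := hu _ (List.length_ofFn (f := fun i : Fin n => w i)) fun k => w (k + n)
  rwa [listApp_ofFn_shift, ← List.Vector.toList_ofFn] at hw

theorem genSet_subset_range_union_range (bot : X) (n : ℕ)
    (h : ∀ u : List A, 2 * n ≤ u.length → ∀ p : List X, p.length = n →
      ∀ q : ℕ → X, M.outWInf u (listApp p q) = listApp (M.outW u p) fun _ => bot) :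
    M.genSet ⊆ Set.range (fun s : Σ k : Fin (2 * n), Fin k → A => M.outWInf (List.ofFn s.2)) ∪
      Set.range (padBot bot (n := n)) := by
  rintro _ ⟨u, -, rfl⟩
  by_cases hu : u.length < 2 * n
  · exact Or.inl ⟨⟨⟨u.length, hu⟩, u.get⟩, by simp⟩
  · exact Or.inr ⟨_, (M.outWInf_eq_padBot bot n u (h u (by omega))).symm⟩

end Mealy

/-- if in a Mealy automaton every state word `u` of length at
least `2n` satisfies `σ_u(pq) = σ_u(p) ⊥^ω` for all `p ∈ Σ^n`, `q ∈ Σ^ω`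
(for a fixed letter `⊥`), then the generated semigroup has cardinality at
most `(Σ_{k=0}^{2n−1} |A|^k) + |Σ^n|^{|Σ^n|}`; in particular it is finite. -/
theorem stmt_18 {A X : Type*} [Fintype A] [Fintype X] (M : Mealy A X)
    (bot : X) (n : ℕ)
    (h : ∀ u : List A, 2 * n ≤ u.length → ∀ p : List X, p.length = n →
      ∀ q : ℕ → X, M.outWInf u (listApp p q) = listApp (M.outW u p) fun _ => bot) :
    M.genSet.Finite ∧
    M.genSet.ncard ≤
      (∑ k ∈ Finset.range (2 * n), Fintype.card A ^ k) +
        (Fintype.card X ^ n) ^ (Fintype.card X ^ n) := by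
  obtain ⟨hfin, hcard⟩ :=
    Set.finite_and_ncard_le_of_subset_range_union (M.genSet_subset_range_union_range bot n h)
  refine ⟨hfin, hcard.trans_eq ?_⟩
  simp only [Nat.card_fun, Nat.card_eq_fintype_card, Fintype.card_sigma, Fintype.card_fun,
    Fintype.card_fin, card_vector, Fin.sum_univ_eq_sum_range (Fintype.card A ^ ·)]
end
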